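/- arXiv:2307.06685 — 3 statements merged into one kernel-verified Lean document; each statement's English description precedes it below -/
import Mathlib

section
/- Let q ≥ 2 be an integer, X a random variable with values in [0,1), and F its cumulative distribution function. Suppose F has no jump at any base-q fraction, i.e. at any point of the form Σ_{k=1}^n j_k q^{−k} with j_k ∈ {0,1,…,q−1} and n ∈ ℕ. Then for every n ≥ 1 and every x ∈ [0,1], the cumulative distribution function F_n of T^n(X) satisfies F_n(x) = Σ_{j=0}^{q^n−1} [F(q^{−n}(j+x)) − F(q^{−n} j)]. -/
open MeasureTheory Set

/-- The base-`q` map `T(x) = q·x − ⌊q·x⌋`. -/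
noncomputable def T (q : ℕ) : ℝ → ℝ := fun x => Int.fract ((q : ℝ) * x)

/-!
For `y ∈ [0,1)` we have `Tⁿ y = fract (qⁿ y)`, so with `N = qⁿ` the event `Tⁿ X ≤ x` is the
event that `N X` lies in some `[j, j + x]` with `j < N`. Up to the endpoints `X = j / N`, which
carry no mass by assumption, these are the disjoint events `X ∈ (j / N, (j + x) / N]`, whose
probabilities are `F ((j + x) / N) - F (j / N)`.
-/

lemma T_fract (q : ℕ) (y : ℝ) : T q (Int.fract y) = Int.fract ((q : ℝ) * y) := by
  have h : (q : ℝ) * Int.fract y = (q : ℝ) * y - ((q * ⌊y⌋ : ℤ) : ℝ) := by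
    rw [Int.fract]; push_cast; ring
  rw [T, h, Int.fract_sub_intCast]

lemma T_iterate_fract (q n : ℕ) (y : ℝ) :
    (T q)^[n] (Int.fract y) = Int.fract ((q : ℝ) ^ n * y) := by
  induction n generalizing y with
  | zero => simp
  | succ n ih => rw [Function.iterate_succ_apply, T_fract, ih, pow_succ, mul_assoc]

lemma Int.fract_le_of_mem_Ioc {t x : ℝ} {j : ℤ} (ht : t ∈ Ioc (j : ℝ) (j + x)) :
    Int.fract t ≤ x := by
  obtain ⟨hjt, htx⟩ := ht
  rcases lt_or_ge t (j + 1) with h | h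
  · rw [← Int.self_sub_floor, Int.floor_eq_iff.2 ⟨hjt.le, h⟩]
    linarith
  · linarith [Int.fract_lt_one t]

lemma exists_eq_or_mem_Ioc_of_fract_le {t x : ℝ} {N : ℕ} (ht : t ∈ Ico 0 (N : ℝ))
    (h : Int.fract t ≤ x) : ∃ j < N, t = j ∨ t ∈ Ioc (j : ℝ) (j + x) := by
  have hfract : Int.fract t = t - ⌊t⌋₊ := by
    rw [← Int.self_sub_floor, ← Int.natCast_floor_eq_floor ht.1, Int.cast_natCast]
  refine ⟨⌊t⌋₊, (Nat.floor_lt ht.1).2 ht.2, ?_⟩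
  rcases (Int.fract_nonneg t).eq_or_lt with h0 | h0
  · left; linarith
  · right; constructor <;> linarith

lemma pairwise_disjoint_Ioc_div_natCast (N : ℕ) {x : ℝ} (hx : x ≤ 1) :
    Pairwise (Function.onFun Disjoint fun j : ℕ => Ioc ((j : ℝ) / N) ((j + x) / N)) := by
  refine (Monotone.pairwise_disjoint_on_Ioc_succ (f := fun j : ℕ => (j : ℝ) / N) ?_).mono
    fun i j h => h.mono (Ioc_subset_Ioc_right ?_) (Ioc_subset_Ioc_right ?_)
  · exact fun i j hij => by dsimp only; gcongr
  all_goals rw [Order.succ_eq_add_one, Nat.cast_add_one]; gcongr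

section FractMul

variable {Ω : Type*} [MeasurableSpace Ω] (μ : Measure Ω) {X : Ω → ℝ} {N : ℕ} {x : ℝ}

lemma fract_mul_le_ae_eq_biUnion_Ioc (hXrange : ∀ ω, X ω ∈ Ico (0 : ℝ) 1) (hN : 0 < N)
    (hatom : ∀ j < N, μ {ω | X ω = j / N} = 0) :
    {ω | Int.fract (N * X ω) ≤ x}
      =ᵐ[μ] ⋃ j ∈ Finset.range N, X ⁻¹' Ioc ((j : ℝ) / N) ((j + x) / N) := by
  have hN' : (0 : ℝ) < N := Nat.cast_pos.2 hN
  have hscale : ∀ (j : ℕ) ω, X ω ∈ Ioc ((j : ℝ) / N) ((j + x) / N) ↔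
      N * X ω ∈ Ioc (j : ℝ) (j + x) := fun j ω => by
    rw [← preimage_const_mul_Ioc₀ _ _ hN', mem_preimage]
  have hsub : {ω | Int.fract (N * X ω) ≤ x}
      ⊆ (⋃ j ∈ Finset.range N, X ⁻¹' Ioc ((j : ℝ) / N) ((j + x) / N))
        ∪ ⋃ j ∈ Finset.range N, {ω | X ω = j / N} := by
    intro ω hω
    have hNX : N * X ω ∈ Ico 0 (N : ℝ) :=
      ⟨mul_nonneg hN'.le (hXrange ω).1, by nlinarith [(hXrange ω).2]⟩
    obtain ⟨j, hj, hpt | hmem⟩ := exists_eq_or_mem_Ioc_of_fract_le hNX hω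
    · refine Or.inr (mem_biUnion (Finset.mem_range.2 hj) ?_)
      show X ω = j / N
      rw [eq_div_iff hN'.ne', mul_comm, hpt]
    · exact Or.inl (mem_biUnion (Finset.mem_range.2 hj) ((hscale j ω).2 hmem))
  have hsup : ⋃ j ∈ Finset.range N, X ⁻¹' Ioc ((j : ℝ) / N) ((j + x) / N)
      ⊆ {ω | Int.fract (N * X ω) ≤ x} :=
    iUnion₂_subset fun j _ ω hω =>
      Int.fract_le_of_mem_Ioc (j := j) (by exact_mod_cast (hscale j ω).1 hω)
  have hnull : μ (⋃ j ∈ Finset.range N, {ω | X ω = j / N}) = 0 :=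
    (measure_biUnion_null_iff (Finset.range N).countable_toSet).2
      fun j hj => hatom j (Finset.mem_range.1 hj)
  exact ae_eq_set.2
    ⟨measure_mono_null (sdiff_subset_iff.2 hsub) hnull, by rw [sdiff_eq_empty.2 hsup, measure_empty]⟩

theorem measureReal_fract_mul_le [IsFiniteMeasure μ] (hX : Measurable X)
    (hXrange : ∀ ω, X ω ∈ Ico (0 : ℝ) 1) (hN : 0 < N) (hatom : ∀ j < N, μ {ω | X ω = j / N} = 0)
    (hx : x ∈ Icc (0 : ℝ) 1) :
    μ.real {ω | Int.fract (N * X ω) ≤ x}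
      = ∑ j ∈ Finset.range N, (μ.real {ω | X ω ≤ (j + x) / N} - μ.real {ω | X ω ≤ j / N}) := by
  calc μ.real {ω | Int.fract (N * X ω) ≤ x}
      = μ.real (⋃ j ∈ Finset.range N, X ⁻¹' Ioc ((j : ℝ) / N) ((j + x) / N)) :=
        measureReal_congr (fract_mul_le_ae_eq_biUnion_Ioc μ hXrange hN hatom)
    _ = ∑ j ∈ Finset.range N, μ.real (X ⁻¹' Ioc ((j : ℝ) / N) ((j + x) / N)) :=
        measureReal_biUnion_finset
          (fun i _ j _ h => (pairwise_disjoint_Ioc_div_natCast N hx.2 h).preimage X)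
          fun j _ => hX measurableSet_Ioc
    _ = _ := Finset.sum_congr rfl fun j _ => by
        rw [← Iic_sdiff_Iic, preimage_sdiff, measureReal_sdiff
          (preimage_mono (Iic_subset_Iic.2 (by gcongr; linarith [hx.1]))) (hX measurableSet_Iic)]
        rfl

end FractMul

theorem stmt0_general
    {Ω : Type*} [MeasurableSpace Ω] (ℙ : Measure Ω) [IsProbabilityMeasure ℙ]
    (q : ℕ) (hq : 2 ≤ q)
    (X : Ω → ℝ) (hX : Measurable X) (hXrange : ∀ ω, X ω ∈ Set.Ico (0:ℝ) 1)
    -- `F` has no jump at any base-`q` fraction `m/q^n` in `[0,1)`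
    (hnojump : ∀ n m : ℕ, m < q ^ n → ℙ {ω | X ω = (m : ℝ) / (q : ℝ) ^ n} = 0)
    (n : ℕ) (x : ℝ) (hx : x ∈ Set.Icc (0:ℝ) 1) :
    (ℙ {ω | (T q)^[n] (X ω) ≤ x}).toReal
      = ∑ j ∈ Finset.range (q ^ n),
          ((ℙ {ω | X ω ≤ ((j : ℝ) + x) / (q : ℝ) ^ n}).toReal
            - (ℙ {ω | X ω ≤ (j : ℝ) / (q : ℝ) ^ n}).toReal) := by
  have hiter : ∀ ω, (T q)^[n] (X ω) = Int.fract ((q : ℝ) ^ n * X ω) := fun ω => by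
    simpa only [Int.fract_eq_self.2 (hXrange ω)] using T_iterate_fract q n (X ω)
  have h := measureReal_fract_mul_le ℙ hX hXrange (pow_pos (by omega : 0 < q) n)
    (fun j hj => by rw [Nat.cast_pow]; exact hnojump n j hj) hx
  simp only [Nat.cast_pow] at h
  simp only [hiter]
  exact h

theorem stmt0
    {Ω : Type*} [MeasurableSpace Ω] (ℙ : Measure Ω) [IsProbabilityMeasure ℙ]
    (q : ℕ) (hq : 2 ≤ q)
    (X : Ω → ℝ) (hX : Measurable X) (hXrange : ∀ ω, X ω ∈ Set.Ico (0:ℝ) 1)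
    -- `F` has no jump at any base-`q` fraction `m/q^n` in `[0,1)`
    (hnojump : ∀ n m : ℕ, m < q ^ n → ℙ {ω | X ω = (m : ℝ) / (q : ℝ) ^ n} = 0)
    (n : ℕ) (hn : 1 ≤ n) (x : ℝ) (hx : x ∈ Set.Icc (0:ℝ) 1) :
    (ℙ {ω | (T q)^[n] (X ω) ≤ x}).toReal
      = ∑ j ∈ Finset.range (q ^ n),
          ((ℙ {ω | X ω ≤ ((j : ℝ) + x) / (q : ℝ) ^ n}).toReal
            - (ℙ {ω | X ω ≤ (j : ℝ) / (q : ℝ) ^ n}).toReal) :=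
  stmt0_general ℙ q hq X hX hXrange hnojump n x hx
end

section
/- Let q ≥ 2 be an integer and let f be a probability density function on [0,1) that is lower semi-continuous at Lebesgue-almost every point of [0,1). Then there exists a probability space carrying a random variable Y with values in [0,1) whose law has density f, and a random variable N with values in the non-negative integers, such that T^N(Y) is uniformly distributed on [0,1) and T^N(Y) is independent of the pair (N, ⌊q^N Y⌋) (equivalently, independent of the random-length digit string (Y_1,…,Y_N)), and moreover P(N ≤ n) = q^{−n} Σ_{k=1}^{q^n} inf_{I_{k;n}} f for every n ≥ 0. -/
/-!
Take `(x, u)` uniform on the subgraph `{0 ≤ u < f x}` of `f`, so that `x` has density `f`. Let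
`g n x` be the infimum of `f` over the level-`n` cell `{y | ⌊q^n y⌋ = ⌊q^n x⌋}`; it increases
with `n`, and by lower semicontinuity `u < g n x` for some `n`, so `N = min {n | u < g n x}` is
almost surely defined. The event `{N = n, ⌊q^n x⌋ = j}` is then the rectangle
`{⌊q^n x⌋ = j} × [g (n-1), g n)` (with `g (-1) = 0`, and both values constant on the cell), on
which `x` is uniform on its cell; so `T^n x = q^n x - j` is uniform on `[0,1)` whatever `(n, j)`
is, which gives both its law and the independence. Finally `{N ≤ n} = {u < g n x}` has measure
`∫ g n = q^{-n} Σ_k inf_{I_{k;n}} f`.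
-/

open MeasureTheory Set

/-- The interval `I_{k;n} = [(k−1)q^{−n}, k·q^{−n})`. -/
noncomputable def Ikn (q n k : ℕ) : Set ℝ :=
  Set.Ico (((k : ℝ) - 1) / (q : ℝ) ^ n) ((k : ℝ) / (q : ℝ) ^ n)

lemma measurable_sInf_setOf {α : Type*} [MeasurableSpace α] {P : α → ℕ → Prop}
    (hP : ∀ n, MeasurableSet {x | P x n}) : Measurable fun x => sInf {n | P x n} := by
  refine measurable_of_Iic fun n => ?_
  have : (fun x => sInf {n | P x n}) ⁻¹' Iic n
      = (⋃ k ∈ Iic n, {x | P x k}) ∪ ⋂ k, {x | P x k}ᶜ := by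
    ext x
    simp only [mem_preimage, mem_Iic, mem_union, mem_iUnion, mem_iInter, mem_compl_iff,
      mem_ofPred_eq, exists_prop]
    constructor
    · intro h
      by_cases hne : ∃ k, P x k
      · exact Or.inl ⟨_, h, Nat.sInf_mem hne⟩
      · push Not at hne
        exact Or.inr hne
    · rintro (⟨k, hk, hPk⟩ | h)
      · exact (Nat.sInf_le hPk).trans hk
      · simp [h]
  rw [this]
  exact (MeasurableSet.biUnion (to_countable _) fun k _ => hP k).union
    (MeasurableSet.iInter fun k => (hP k).compl)

lemma measure_prod_setOf_mem_Ico {α : Type*} [MeasurableSpace α] (μ : Measure α) [SFinite μ]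
    {a b : α → ℝ} (ha : Measurable a) (hb : Measurable b) {A : Set α} (hA : MeasurableSet A) :
    μ.prod volume {p | p.1 ∈ A ∧ p.2 ∈ Ico (a p.1) (b p.1)}
      = ∫⁻ x in A, ENNReal.ofReal (b x - a x) ∂μ := by
  have hS : MeasurableSet {p : α × ℝ | p.1 ∈ A ∧ p.2 ∈ Ico (a p.1) (b p.1)} :=
    (measurable_fst hA).inter ((measurableSet_le (ha.comp measurable_fst) measurable_snd).inter
      (measurableSet_lt measurable_snd (hb.comp measurable_fst)))
  rw [Measure.prod_apply hS, ← lintegral_indicator hA]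
  congr 1
  funext x
  by_cases hx : x ∈ A
  · rw [indicator_of_mem hx, ← Real.volume_Ico]
    congr 1
    ext u
    simp [hx]
  · simp [hx]

lemma map_fst_restrict_subgraph {f : ℝ → ℝ} (hf : Measurable f) :
    (volume.restrict {p : ℝ × ℝ | p.2 ∈ Ico 0 (f p.1)}).map Prod.fst
      = volume.withDensity fun x => ENNReal.ofReal (f x) := by
  ext A hA
  rw [Measure.map_apply measurable_fst hA, withDensity_apply _ hA, Measure.restrict_apply
    (measurable_fst hA), Measure.volume_eq_prod]
  have := measure_prod_setOf_mem_Ico volume (a := fun _ => 0) measurable_const hf hA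
  simp only [sub_zero] at this
  exact this

lemma map_eq_and_indepFun_of_measure_inter_preimage_singleton {Ω α β : Type*}
    [MeasurableSpace Ω] [MeasurableSpace α] [MeasurableSpace β] [Countable β]
    [MeasurableSingletonClass β] {P : Measure Ω} [IsProbabilityMeasure P] {U : Ω → α}
    {W : Ω → β} (hU : Measurable U) (hW : Measurable W) {ν : Measure α}
    (h : ∀ s, MeasurableSet s → ∀ b, P (U ⁻¹' s ∩ W ⁻¹' {b}) = ν s * P (W ⁻¹' {b})) :
    P.map U = ν ∧ ProbabilityTheory.IndepFun U W P := by
  have hfib : ∀ t : Set β, ∀ b ∈ t, MeasurableSet (W ⁻¹' {b}) :=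
    fun _ b _ => hW (measurableSet_singleton b)
  have key : ∀ s, MeasurableSet s → ∀ t : Set β, P (U ⁻¹' s ∩ W ⁻¹' t) = ν s * P (W ⁻¹' t) := by
    intro s hs t
    calc P (U ⁻¹' s ∩ W ⁻¹' t) = P.restrict (U ⁻¹' s) (W ⁻¹' t) := by
          rw [Measure.restrict_apply' (hU hs), inter_comm]
      _ = ∑' b : t, P.restrict (U ⁻¹' s) (W ⁻¹' {(b : β)}) :=
          (tsum_measure_preimage_singleton t.to_countable (hfib t)).symm
      _ = ∑' b : t, ν s * P (W ⁻¹' {(b : β)}) := by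
          simp only [Measure.restrict_apply' (hU hs), inter_comm _ (U ⁻¹' s), h s hs]
      _ = ν s * P (W ⁻¹' t) := by
          rw [ENNReal.tsum_mul_left, tsum_measure_preimage_singleton t.to_countable (hfib t)]
  have hmap : P.map U = ν := by
    ext s hs
    rw [Measure.map_apply hU hs]
    simpa using key s hs univ
  refine ⟨hmap, ProbabilityTheory.indepFun_iff_measure_inter_preimage_eq_mul.2 fun s t hs _ => ?_⟩
  rw [key s hs t, ← hmap, Measure.map_apply hU hs]

lemma floor_pow_mul_eq_div {q : ℕ} (hq : 0 < q) {m n : ℕ} (hmn : m ≤ n) (x : ℝ) :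
    ⌊(q : ℝ) ^ m * x⌋ = ⌊(q : ℝ) ^ n * x⌋ / ((q ^ (n - m) : ℕ) : ℤ) := by
  rw [← Int.floor_div_natCast]
  congr 1
  have : (q : ℝ) ^ (n - m) ≠ 0 := by positivity
  rw [← Nat.sub_add_cancel hmn, pow_add]
  push_cast
  field_simp
  simp

lemma floor_pow_mul_eq_of_le {q : ℕ} (hq : 0 < q) {m n : ℕ} (hmn : m ≤ n) {x y : ℝ}
    (h : ⌊(q : ℝ) ^ n * x⌋ = ⌊(q : ℝ) ^ n * y⌋) : ⌊(q : ℝ) ^ m * x⌋ = ⌊(q : ℝ) ^ m * y⌋ := by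
  rw [floor_pow_mul_eq_div hq hmn, floor_pow_mul_eq_div hq hmn, h]

lemma mem_Ikn_iff {q : ℕ} (hq : 0 < q) (n k : ℕ) (x : ℝ) :
    x ∈ Ikn q n k ↔ ⌊(q : ℝ) ^ n * x⌋ = (k : ℤ) - 1 := by
  have : (0 : ℝ) < (q : ℝ) ^ n := by positivity
  rw [Ikn, mem_Ico, Int.floor_eq_iff, div_le_iff₀ this, lt_div_iff₀ this]
  push_cast
  constructor <;> rintro ⟨h1, h2⟩ <;> constructor <;> linarith

lemma T_iterate_eq_fract (q : ℕ) {x : ℝ} (hx : x ∈ Ico (0 : ℝ) 1) (n : ℕ) :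
    (T q)^[n] x = Int.fract ((q : ℝ) ^ n * x) := by
  induction n with
  | zero => simp [Int.fract_eq_self.2 hx]
  | succ k ih =>
    rw [Function.iterate_succ_apply', ih, T]
    have : (q : ℝ) * Int.fract ((q : ℝ) ^ k * x)
        = (q : ℝ) ^ (k + 1) * x - ((q * ⌊(q : ℝ) ^ k * x⌋ : ℤ) : ℝ) := by
      rw [Int.fract]; push_cast; ring
    rw [this, Int.fract_sub_intCast]

noncomputable def cellInf (q : ℕ) (f : ℝ → ℝ) (n : ℕ) (x : ℝ) : ℝ :=
  sInf (f '' {y | ⌊(q : ℝ) ^ n * y⌋ = ⌊(q : ℝ) ^ n * x⌋})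

section cellInf

variable {q : ℕ} {f : ℝ → ℝ}

lemma bddBelow_image_of_nonneg (hf : ∀ x, 0 ≤ f x) (s : Set ℝ) : BddBelow (f '' s) :=
  ⟨0, by rintro _ ⟨y, _, rfl⟩; exact hf y⟩

lemma cellInf_le (hf : ∀ x, 0 ≤ f x) (n : ℕ) (x : ℝ) : cellInf q f n x ≤ f x :=
  csInf_le (bddBelow_image_of_nonneg hf _) ⟨x, rfl, rfl⟩

lemma cellInf_nonneg (hf : ∀ x, 0 ≤ f x) (n : ℕ) (x : ℝ) : 0 ≤ cellInf q f n x :=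
  le_csInf ⟨f x, x, rfl, rfl⟩ (by rintro _ ⟨y, _, rfl⟩; exact hf y)

lemma cellInf_mono (hq : 0 < q) (hf : ∀ x, 0 ≤ f x) (x : ℝ) :
    Monotone fun n => cellInf q f n x := fun _ _ hmn =>
  csInf_le_csInf (bddBelow_image_of_nonneg hf _) ⟨f x, x, rfl, rfl⟩
    (image_mono fun _ hy => floor_pow_mul_eq_of_le hq hmn hy)

lemma cellInf_congr (hq : 0 < q) {m n : ℕ} (hmn : m ≤ n) {x y : ℝ}
    (h : ⌊(q : ℝ) ^ n * x⌋ = ⌊(q : ℝ) ^ n * y⌋) : cellInf q f m x = cellInf q f m y := by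
  rw [cellInf, cellInf, floor_pow_mul_eq_of_le hq hmn h]

lemma cellInf_eq_of_mem_Ikn (hq : 0 < q) {n k : ℕ} {x : ℝ} (hx : x ∈ Ikn q n k) :
    cellInf q f n x = sInf (f '' Ikn q n k) := by
  rw [mem_Ikn_iff hq] at hx
  simp only [cellInf, hx]
  congr 2
  ext y
  exact (mem_Ikn_iff hq n k y).symm

lemma measurable_cellInf (n : ℕ) : Measurable (cellInf q f n) :=
  show Measurable ((fun j : ℤ => sInf (f '' {y | ⌊(q : ℝ) ^ n * y⌋ = j})) ∘
    fun x => ⌊(q : ℝ) ^ n * x⌋) from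
  measurable_from_top.comp (Int.measurable_floor.comp (measurable_const_mul _))

lemma exists_lt_cellInf (hq : 1 < q) {x u : ℝ} (hf : LowerSemicontinuousAt f x)
    (hu : u < f x) : ∃ n, u < cellInf q f n x := by
  obtain ⟨u', hu', hu'f⟩ := exists_between hu
  obtain ⟨ε, hε, hball⟩ := Metric.eventually_nhds_iff.1 (hf u' hu'f)
  have hq' : (1 : ℝ) < q := by exact_mod_cast hq
  obtain ⟨n, hn⟩ := exists_pow_lt_of_lt_one hε (inv_lt_one_of_one_lt₀ hq')
  refine ⟨n, hu'.trans_le (le_csInf ⟨f x, x, rfl, rfl⟩ ?_)⟩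
  rintro _ ⟨y, hy, rfl⟩
  refine (hball ?_).le
  have hqn : (0 : ℝ) < (q : ℝ) ^ n := by positivity
  have hyx := Int.abs_sub_lt_one_of_floor_eq_floor hy
  rw [← mul_sub, abs_mul, abs_of_pos hqn, ← lt_div_iff₀' hqn] at hyx
  rw [Real.dist_eq]
  calc |y - x| < 1 / (q : ℝ) ^ n := hyx
    _ = (q : ℝ)⁻¹ ^ n := by rw [inv_pow, one_div]
    _ < ε := hn

end cellInf

noncomputable def digitTime (q : ℕ) (f : ℝ → ℝ) (p : ℝ × ℝ) : ℕ :=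
  sInf {n | p.2 < cellInf q f n p.1}

-- A.e. equal to the subgraph of `f`, but on this set `digitTime` is a genuine minimum.
def belowCellInf (q : ℕ) (f : ℝ → ℝ) : Set (ℝ × ℝ) :=
  {p | 0 ≤ p.2 ∧ ∃ n, p.2 < cellInf q f n p.1}

noncomputable def cutLevel (q : ℕ) (f : ℝ → ℝ) : ℕ → ℝ → ℝ
  | 0 => 0
  | n + 1 => cellInf q f n

section digitTime

variable {q : ℕ} {f : ℝ → ℝ}

lemma measurable_digitTime : Measurable (digitTime q f) :=
  measurable_sInf_setOf fun n =>
    measurableSet_lt measurable_snd ((measurable_cellInf n).comp measurable_fst)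

lemma measurableSet_belowCellInf : MeasurableSet (belowCellInf q f) := by
  simp only [belowCellInf, ofPred_and, ofPred_exists]
  exact (measurableSet_le measurable_const measurable_snd).inter (MeasurableSet.iUnion fun n =>
    measurableSet_lt measurable_snd ((measurable_cellInf n).comp measurable_fst))

lemma digitTime_le_iff (hq : 0 < q) (hf : ∀ x, 0 ≤ f x) {p : ℝ × ℝ}
    (hp : p ∈ belowCellInf q f) {n : ℕ} : digitTime q f p ≤ n ↔ p.2 < cellInf q f n p.1 :=
  ⟨fun h => lt_of_lt_of_le (Nat.sInf_mem hp.2) (cellInf_mono hq hf p.1 h), fun h => Nat.sInf_le h⟩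

lemma digitTime_eq_iff (hq : 0 < q) (hf : ∀ x, 0 ≤ f x) {p : ℝ × ℝ}
    (hp : p ∈ belowCellInf q f) {n : ℕ} :
    digitTime q f p = n ↔ p.2 ∈ Ico (cutLevel q f n p.1) (cutLevel q f (n + 1) p.1) := by
  cases n with
  | zero => simp [cutLevel, hp.1, ← digitTime_le_iff hq hf hp]
  | succ k =>
    rw [mem_Ico, cutLevel, cutLevel, ← not_lt, ← digitTime_le_iff hq hf hp,
      ← digitTime_le_iff hq hf hp]
    omega

lemma cutLevel_nonneg (hf : ∀ x, 0 ≤ f x) (n : ℕ) (x : ℝ) : 0 ≤ cutLevel q f n x := by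
  cases n with
  | zero => exact le_rfl
  | succ k => exact cellInf_nonneg hf k x

lemma cutLevel_congr (hq : 0 < q) {m n : ℕ} (hmn : m ≤ n + 1) {x y : ℝ}
    (h : ⌊(q : ℝ) ^ n * x⌋ = ⌊(q : ℝ) ^ n * y⌋) : cutLevel q f m x = cutLevel q f m y := by
  cases m with
  | zero => rfl
  | succ k => exact cellInf_congr hq (by omega) h

lemma belowCellInf_subset_subgraph (hf : ∀ x, 0 ≤ f x) :
    belowCellInf q f ⊆ {p | p.2 ∈ Ico 0 (f p.1)} :=
  fun p ⟨h0, n, hn⟩ => ⟨h0, hn.trans_le (cellInf_le hf n p.1)⟩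

lemma belowCellInf_ae_eq_subgraph (hq : 1 < q) (hf_meas : Measurable f) (hf : ∀ x, 0 ≤ f x)
    (hlsc : ∀ᵐ x, 0 < f x → LowerSemicontinuousAt f x) :
    belowCellInf q f =ᵐ[volume] {p | p.2 ∈ Ico 0 (f p.1)} := by
  refine (belowCellInf_subset_subgraph hf).eventuallyLE.antisymm (ae_le_set.2 ?_)
  have hS : MeasurableSet {p : ℝ × ℝ | p.2 ∈ Ico 0 (f p.1)} :=
    (measurableSet_le measurable_const measurable_snd).inter
      (measurableSet_lt measurable_snd (hf_meas.comp measurable_fst))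
  rw [Measure.volume_eq_prod, Measure.measure_prod_null (hS.diff measurableSet_belowCellInf)]
  filter_upwards [hlsc] with x hx
  rw [Pi.zero_apply, measure_eq_zero_iff_ae_notMem]
  refine Filter.Eventually.of_forall fun u ⟨⟨hu0, hu⟩, hnot⟩ => hnot ⟨hu0, ?_⟩
  exact exists_lt_cellInf hq (hx (hu0.trans_lt hu)) hu

end digitTime

section volumes

variable {q : ℕ} {f : ℝ → ℝ}

lemma floor_eq_and_fract_mem_iff (z : ℝ) (j : ℤ) (B : Set ℝ) :
    ⌊z⌋ = j ∧ Int.fract z ∈ B ↔ z - j ∈ B ∩ Ico 0 1 := by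
  constructor
  · rintro ⟨rfl, hB⟩
    exact ⟨hB, Int.fract_nonneg z, Int.fract_lt_one z⟩
  · rintro ⟨hB, h0, h1⟩
    have hj : ⌊z⌋ = j := Int.floor_eq_iff.2 ⟨by linarith, by linarith⟩
    exact ⟨hj, by rwa [Int.fract, hj]⟩

lemma volume_setOf_floor_eq_fract_mem (hq : 0 < q) (n : ℕ) (j : ℤ) (B : Set ℝ) :
    volume {x : ℝ | ⌊(q : ℝ) ^ n * x⌋ = j ∧ Int.fract ((q : ℝ) ^ n * x) ∈ B}
      = ENNReal.ofReal ((q : ℝ) ^ n)⁻¹ * volume (B ∩ Ico 0 1) := by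
  have hqn : (0 : ℝ) < (q : ℝ) ^ n := by positivity
  have : {x : ℝ | ⌊(q : ℝ) ^ n * x⌋ = j ∧ Int.fract ((q : ℝ) ^ n * x) ∈ B}
      = (fun x => (q : ℝ) ^ n * x) ⁻¹' ((fun z => z + -(j : ℝ)) ⁻¹' (B ∩ Ico 0 1)) := by
    ext x
    simp only [mem_ofPred_eq, mem_preimage, ← sub_eq_add_neg]
    exact floor_eq_and_fract_mem_iff _ j B
  rw [this, Real.volume_preimage_mul_left hqn.ne', measure_preimage_add_right,
    abs_of_pos (inv_pos.2 hqn)]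

lemma setOf_digitTime_eq_inter_belowCellInf (hq : 0 < q) (hf : ∀ x, 0 ≤ f x) (n : ℕ) (j : ℤ)
    (B : Set ℝ) :
    {p : ℝ × ℝ | digitTime q f p = n ∧ ⌊(q : ℝ) ^ n * p.1⌋ = j ∧
        Int.fract ((q : ℝ) ^ n * p.1) ∈ B} ∩ belowCellInf q f
      = {x : ℝ | ⌊(q : ℝ) ^ n * x⌋ = j ∧ Int.fract ((q : ℝ) ^ n * x) ∈ B} ×ˢ
        Ico (cutLevel q f n (j / (q : ℝ) ^ n)) (cutLevel q f (n + 1) (j / (q : ℝ) ^ n)) := by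
  have hj : ⌊(q : ℝ) ^ n * (j / (q : ℝ) ^ n)⌋ = j := by
    rw [mul_div_cancel₀ _ (by positivity)]
    exact Int.floor_intCast j
  ext ⟨x, u⟩
  simp only [mem_inter_iff, mem_ofPred_eq, mem_prod]
  constructor
  · rintro ⟨⟨hN, hx, hB⟩, hp⟩
    have hxj := hx.trans hj.symm
    rw [← cutLevel_congr hq (by omega) hxj, ← cutLevel_congr hq le_rfl hxj]
    exact ⟨⟨hx, hB⟩, (digitTime_eq_iff hq hf hp).1 hN⟩
  · rintro ⟨⟨hx, hB⟩, hu⟩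
    have hxj := hx.trans hj.symm
    rw [← cutLevel_congr hq (by omega) hxj, ← cutLevel_congr hq le_rfl hxj] at hu
    have hp : (x, u) ∈ belowCellInf q f := ⟨(cutLevel_nonneg hf n x).trans hu.1, n, hu.2⟩
    exact ⟨⟨(digitTime_eq_iff hq hf hp).2 hu, hx, hB⟩, hp⟩

lemma volume_setOf_digitTime_eq_inter_belowCellInf (hq : 0 < q) (hf : ∀ x, 0 ≤ f x) (n : ℕ) (j : ℤ)
    (B : Set ℝ) :
    volume ({p : ℝ × ℝ | digitTime q f p = n ∧ ⌊(q : ℝ) ^ n * p.1⌋ = j ∧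
        Int.fract ((q : ℝ) ^ n * p.1) ∈ B} ∩ belowCellInf q f)
      = volume (B ∩ Ico 0 1) * (ENNReal.ofReal ((q : ℝ) ^ n)⁻¹ * ENNReal.ofReal
          (cutLevel q f (n + 1) (j / (q : ℝ) ^ n) - cutLevel q f n (j / (q : ℝ) ^ n))) := by
  rw [setOf_digitTime_eq_inter_belowCellInf hq hf, Measure.volume_eq_prod, Measure.prod_prod,
    volume_setOf_floor_eq_fract_mem hq, Real.volume_Ico]
  ring

lemma mem_Ico_iff_floor (hq : 0 < q) (n : ℕ) (x : ℝ) :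
    x ∈ Ico (0 : ℝ) 1 ↔ 0 ≤ ⌊(q : ℝ) ^ n * x⌋ ∧ ⌊(q : ℝ) ^ n * x⌋ < ((q ^ n : ℕ) : ℤ) := by
  have hqn : (0 : ℝ) < (q : ℝ) ^ n := by positivity
  rw [Int.floor_nonneg, Int.floor_lt, mem_Ico]
  push_cast
  rw [mul_nonneg_iff_of_pos_left hqn, mul_lt_iff_lt_one_right hqn]

lemma Ico_eq_biUnion_Ikn (hq : 0 < q) (n : ℕ) :
    Ico (0 : ℝ) 1 = ⋃ k ∈ Finset.Icc 1 (q ^ n), Ikn q n k := by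
  ext x
  simp only [mem_iUnion, mem_Ikn_iff hq, Finset.mem_Icc, exists_prop, mem_Ico_iff_floor hq n]
  constructor
  · rintro ⟨h0, h1⟩
    exact ⟨(⌊(q : ℝ) ^ n * x⌋).toNat + 1, ⟨by omega, by omega⟩, by omega⟩
  · rintro ⟨k, ⟨hk1, hk2⟩, hk⟩
    omega

lemma pairwiseDisjoint_Ikn (hq : 0 < q) (n : ℕ) (s : Set ℕ) : s.PairwiseDisjoint (Ikn q n) :=
  fun k _ l _ hkl => disjoint_left.2 fun x hk hl => hkl <| by
    rw [mem_Ikn_iff hq] at hk hl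
    omega

lemma volume_Ikn (n k : ℕ) : volume (Ikn q n k) = ENNReal.ofReal ((q : ℝ) ^ n)⁻¹ := by
  rw [Ikn, Real.volume_Ico]
  ring_nf

lemma volume_setOf_digitTime_le_inter_belowCellInf (hq : 0 < q) (hf : ∀ x, 0 ≤ f x)
    (hf_supp : ∀ x, x ∉ Ico (0 : ℝ) 1 → f x = 0) (n : ℕ) :
    volume ({p : ℝ × ℝ | digitTime q f p ≤ n} ∩ belowCellInf q f)
      = ENNReal.ofReal
          ((q : ℝ) ^ (-(n : ℤ)) * ∑ k ∈ Finset.Icc 1 (q ^ n), sInf (f '' Ikn q n k)) := by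
  have hset : {p : ℝ × ℝ | digitTime q f p ≤ n} ∩ belowCellInf q f
      = {p | p.1 ∈ univ ∧ p.2 ∈ Ico ((fun _ => 0) p.1) (cellInf q f n p.1)} := by
    ext p
    constructor
    · rintro ⟨hN, hp⟩
      exact ⟨trivial, hp.1, (digitTime_le_iff hq hf hp).1 hN⟩
    · rintro ⟨-, h0, hlt⟩
      have hp : p ∈ belowCellInf q f := ⟨h0, n, hlt⟩
      exact ⟨(digitTime_le_iff hq hf hp).2 hlt, hp⟩
  have hsupp : (fun x => ENNReal.ofReal (cellInf q f n x - 0)).support ⊆ Ico 0 1 := by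
    intro x hx
    by_contra hxI
    apply hx
    simp [le_antisymm ((cellInf_le hf n x).trans_eq (hf_supp x hxI)) (cellInf_nonneg hf n x)]
  have hconst : ∀ k, ∀ x ∈ Ikn q n k,
      ENNReal.ofReal (cellInf q f n x - 0) = ENNReal.ofReal (sInf (f '' Ikn q n k)) := by
    intro k x hx
    rw [sub_zero, cellInf_eq_of_mem_Ikn hq hx]
  rw [hset, Measure.volume_eq_prod, measure_prod_setOf_mem_Ico volume measurable_const
    (measurable_cellInf n) MeasurableSet.univ, Measure.restrict_univ,
    ← setLIntegral_eq_of_support_subset hsupp, Ico_eq_biUnion_Ikn hq n,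
    lintegral_biUnion_finset (pairwiseDisjoint_Ikn hq n _) fun _ _ => measurableSet_Ico]
  rw [Finset.sum_congr rfl fun k _ => by
    rw [setLIntegral_congr_fun (s := Ikn q n k) measurableSet_Ico (hconst k), setLIntegral_const,
      volume_Ikn]]
  have hinf : ∀ k ∈ Finset.Icc 1 (q ^ n), 0 ≤ sInf (f '' Ikn q n k) := fun k _ =>
    Real.sInf_nonneg (by rintro _ ⟨y, _, rfl⟩; exact hf y)
  rw [← Finset.sum_mul, ← ENNReal.ofReal_sum_of_nonneg hinf,
    ← ENNReal.ofReal_mul (Finset.sum_nonneg hinf), mul_comm, zpow_neg, zpow_natCast]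

end volumes

section law

variable {q : ℕ} {f : ℝ → ℝ}

lemma lintegral_ofReal_eq_one (hf : ∀ x, 0 ≤ f x) (hf_supp : ∀ x, x ∉ Ico (0 : ℝ) 1 → f x = 0)
    (hf_pdf : ∫ x in Ico (0 : ℝ) 1, f x = 1) : ∫⁻ x, ENNReal.ofReal (f x) = 1 := by
  have hsupp : (fun x => ENNReal.ofReal (f x)).support ⊆ Ico 0 1 := fun x hx => by
    by_contra hxI
    simp [hf_supp x hxI] at hx
  rw [← setLIntegral_eq_of_support_subset hsupp, ← ofReal_integral_eq_lintegral_ofReal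
    (Integrable.of_integral_ne_zero (by rw [hf_pdf]; exact one_ne_zero))
    (ae_of_all _ fun x => hf x), hf_pdf, ENNReal.ofReal_one]

lemma fst_mem_Ico_of_mem_belowCellInf (hf : ∀ x, 0 ≤ f x)
    (hf_supp : ∀ x, x ∉ Ico (0 : ℝ) 1 → f x = 0) {p : ℝ × ℝ} (hp : p ∈ belowCellInf q f) :
    p.1 ∈ Ico (0 : ℝ) 1 := by
  obtain ⟨h0, n, hn⟩ := hp
  by_contra hx
  linarith [cellInf_le (q := q) hf n p.1, hf_supp _ hx]

lemma measurable_T_iterate_digitTime :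
    Measurable fun p : ℝ × ℝ => (T q)^[digitTime q f p] p.1 :=
  (measurable_from_prod_countable_left (f := fun z : ℝ × ℕ => (T q)^[z.2] z.1) fun n =>
    (show Measurable (T q) from measurable_fract.comp (measurable_const_mul _)).iterate n).comp
    (measurable_fst.prodMk measurable_digitTime)

lemma measurable_digitTime_floor :
    Measurable fun p : ℝ × ℝ => (digitTime q f p, ⌊(q : ℝ) ^ digitTime q f p * p.1⌋) :=
  measurable_digitTime.prodMk ((measurable_from_prod_countable_left
    (f := fun z : ℝ × ℕ => ⌊(q : ℝ) ^ z.2 * z.1⌋) fun n =>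
    Int.measurable_floor.comp (measurable_const_mul ((q : ℝ) ^ n))).comp
    (measurable_fst.prodMk measurable_digitTime))

lemma restrict_belowCellInf_preimage_inter_preimage_singleton (hq : 0 < q) (hf : ∀ x, 0 ≤ f x)
    (hf_supp : ∀ x, x ∉ Ico (0 : ℝ) 1 → f x = 0) (s : Set ℝ) (n : ℕ) (j : ℤ) :
    volume.restrict (belowCellInf q f)
        ((fun p => (T q)^[digitTime q f p] p.1) ⁻¹' s ∩
          (fun p => (digitTime q f p, ⌊(q : ℝ) ^ digitTime q f p * p.1⌋)) ⁻¹' {(n, j)})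
      = volume.restrict (Ico 0 1) s * volume.restrict (belowCellInf q f)
          ((fun p => (digitTime q f p, ⌊(q : ℝ) ^ digitTime q f p * p.1⌋)) ⁻¹' {(n, j)}) := by
  have hevent : ∀ B, ((fun p => (T q)^[digitTime q f p] p.1) ⁻¹' B ∩
      (fun p => (digitTime q f p, ⌊(q : ℝ) ^ digitTime q f p * p.1⌋)) ⁻¹' {(n, j)}) ∩
        belowCellInf q f
      = {p : ℝ × ℝ | digitTime q f p = n ∧ ⌊(q : ℝ) ^ n * p.1⌋ = j ∧
        Int.fract ((q : ℝ) ^ n * p.1) ∈ B} ∩ belowCellInf q f := by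
    intro B
    ext p
    simp only [mem_inter_iff, mem_preimage, mem_singleton_iff, Prod.mk.injEq, mem_ofPred_eq]
    constructor
    · rintro ⟨⟨hB, rfl, hj⟩, hp⟩
      rw [T_iterate_eq_fract q (fst_mem_Ico_of_mem_belowCellInf hf hf_supp hp)] at hB
      exact ⟨⟨rfl, hj, hB⟩, hp⟩
    · rintro ⟨⟨rfl, hj, hB⟩, hp⟩
      rw [← T_iterate_eq_fract q (fst_mem_Ico_of_mem_belowCellInf hf hf_supp hp)] at hB
      exact ⟨⟨hB, rfl, hj⟩, hp⟩
  have hfiber := hevent univ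
  rw [preimage_univ, univ_inter] at hfiber
  rw [Measure.restrict_apply' measurableSet_belowCellInf,
    Measure.restrict_apply' measurableSet_belowCellInf, Measure.restrict_apply' measurableSet_Ico,
    hevent, hfiber, volume_setOf_digitTime_eq_inter_belowCellInf hq hf,
    volume_setOf_digitTime_eq_inter_belowCellInf hq hf, univ_inter, Real.volume_Ico]
  simp

end law

theorem stmt4
    (q : ℕ) (hq : 2 ≤ q)
    (f : ℝ → ℝ) (hf_meas : Measurable f) (hf_nonneg : ∀ x, 0 ≤ f x)
    (hf_supp : ∀ x, x ∉ Set.Ico (0:ℝ) 1 → f x = 0)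
    (hf_pdf : ∫ x in Set.Ico (0:ℝ) 1, f x = 1)
    -- `f` is lower semi-continuous at Lebesgue-almost every point of `[0,1)`
    (hf_lsc : ∀ᵐ x ∂(volume : Measure ℝ),
      x ∈ Set.Ico (0:ℝ) 1 → LowerSemicontinuousAt f x) :
    ∃ (Ω : Type) (_ : MeasurableSpace Ω) (ℙ : Measure Ω) (_ : IsProbabilityMeasure ℙ)
      (Y : Ω → ℝ) (N : Ω → ℕ),
      Measurable Y ∧ Measurable N ∧
      -- the law of `Y` has density `f`
      Measure.map Y ℙ = volume.withDensity (fun x => ENNReal.ofReal (f x)) ∧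
      -- `T^N(Y)` is uniformly distributed on `[0,1)`
      Measure.map (fun ω => (T q)^[N ω] (Y ω)) ℙ = volume.restrict (Set.Ico (0:ℝ) 1) ∧
      -- `T^N(Y)` is independent of `(N, ⌊q^N Y⌋)`
      ProbabilityTheory.IndepFun (fun ω => (T q)^[N ω] (Y ω))
        (fun ω => (N ω, ⌊(q : ℝ) ^ (N ω) * Y ω⌋)) ℙ ∧
      -- the distribution of `N`
      ∀ n : ℕ, (ℙ {ω | N ω ≤ n}).toReal
        = (q : ℝ) ^ (-(n : ℤ)) * ∑ k ∈ Finset.Icc 1 (q ^ n), sInf (f '' Ikn q n k) := by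
  have hq0 : 0 < q := by omega
  have hlsc : ∀ᵐ x, 0 < f x → LowerSemicontinuousAt f x := by
    filter_upwards [hf_lsc] with x hx hfx
    exact hx (by_contra fun hxI => hfx.ne' (hf_supp x hxI))
  have hY : (volume.restrict (belowCellInf q f)).map Prod.fst
      = volume.withDensity fun x => ENNReal.ofReal (f x) := by
    rw [Measure.restrict_congr_set (belowCellInf_ae_eq_subgraph hq hf_meas hf_nonneg hlsc),
      map_fst_restrict_subgraph hf_meas]
  have hprob : IsProbabilityMeasure (volume.restrict (belowCellInf q f)) := ⟨by
    rw [← preimage_univ (f := Prod.fst), ← Measure.map_apply measurable_fst .univ, hY,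
      withDensity_apply _ .univ, Measure.restrict_univ,
      lintegral_ofReal_eq_one hf_nonneg hf_supp hf_pdf]⟩
  obtain ⟨hU, hindep⟩ := map_eq_and_indepFun_of_measure_inter_preimage_singleton
    measurable_T_iterate_digitTime measurable_digitTime_floor fun s _ ⟨n, j⟩ =>
      restrict_belowCellInf_preimage_inter_preimage_singleton hq0 hf_nonneg hf_supp s n j
  refine ⟨ℝ × ℝ, inferInstance, volume.restrict (belowCellInf q f), hprob, Prod.fst,
    digitTime q f, measurable_fst, measurable_digitTime, hY, hU, hindep, fun n => ?_⟩
  rw [Measure.restrict_apply' measurableSet_belowCellInf,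
    volume_setOf_digitTime_le_inter_belowCellInf hq0 hf_nonneg hf_supp, ENNReal.toReal_ofReal]
  exact mul_nonneg (zpow_nonneg (Nat.cast_nonneg q) _) (Finset.sum_nonneg fun k _ =>
    Real.sInf_nonneg (by rintro _ ⟨y, _, rfl⟩; exact hf_nonneg y))
end

section
/- Let q ≥ 2 be an integer and let g : (0,1) → ℝ be differentiable with ∫_0^1 g(t) dt = 1 and ‖g′‖_∞ = sup_{(0,1)} |g′| < ∞. Then for every n ≥ 1 and every x ∈ (0,1), |g_n(x) − 1| ≤ q^{−2n} (x² − x + 1/2) Σ_{j=0}^{q^n−1} ‖g′_{n,j}‖_∞ ≤ (1/2) q^{−n} ‖g′‖_∞. -/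
open MeasureTheory Set

/-- `g_n(x) = q^{−n} Σ_{j=0}^{q^n−1} g(q^{−n}(j+x))`. -/
noncomputable def gIter (q : ℕ) (g : ℝ → ℝ) (n : ℕ) (x : ℝ) : ℝ :=
  (q : ℝ) ^ (-(n : ℤ)) * ∑ j ∈ Finset.range (q ^ n), g (((j : ℝ) + x) / (q : ℝ) ^ n)

/-! Cut `(0,1)` into the `N = q^n` cells `(j/N, (j+1)/N)`. The `j`-th term `N⁻¹ g(c)` of `g_n(x)`,
with `c = (j+x)/N`, differs from the integral of `g` over the cell by at most
`∫ |g c - g t| dt ≤ ‖g′_{n,j}‖_∞ ∫ |c - t| dt = ‖g′_{n,j}‖_∞ (x² - x + 1/2) / N²` by the mean value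
theorem. Summing over the cells and using `∫ g = 1` gives the first bound; the second follows from
`‖g′_{n,j}‖_∞ ≤ ‖g′‖_∞` and `x² - x + 1/2 ≤ 1/2`. -/

open intervalIntegral in
lemma integral_abs_sub_eq {a b c : ℝ} (hac : a ≤ c) (hcb : c ≤ b) :
    ∫ t in a..b, |c - t| = ((c - a) ^ 2 + (b - c) ^ 2) / 2 := by
  have hcont : Continuous fun t : ℝ => |c - t| := by fun_prop
  rw [← integral_add_adjacent_intervals (hcont.intervalIntegrable a c)
    (hcont.intervalIntegrable c b)]
  have hleft : ∫ t in a..c, |c - t| = ∫ t in a..c, (c - t) :=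
    integral_congr fun t ht => abs_of_nonneg (by rw [uIcc_of_le hac] at ht; linarith [ht.2])
  have hright : ∫ t in c..b, |c - t| = ∫ t in c..b, (t - c) :=
    integral_congr fun t ht => by
      rw [uIcc_of_le hcb] at ht
      rw [abs_sub_comm, abs_of_nonneg (by linarith [ht.1])]
  rw [hleft, hright, integral_sub intervalIntegrable_const intervalIntegrable_id,
    integral_sub intervalIntegrable_id intervalIntegrable_const]
  simp only [intervalIntegral.integral_const, integral_id, smul_eq_mul]
  ring

open intervalIntegral in
lemma abs_mul_sub_integral_le {g g' : ℝ → ℝ} {a b c C : ℝ} (hc : c ∈ Ioo a b)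
    (hderiv : ∀ y ∈ Ioo a b, HasDerivAt g (g' y) y) (hC : ∀ y ∈ Ioo a b, |g' y| ≤ C)
    (hg : IntegrableOn g (Ioo a b)) :
    |(b - a) * g c - ∫ t in a..b, g t| ≤ C * (((c - a) ^ 2 + (b - c) ^ 2) / 2) := by
  have hab : a ≤ b := (hc.1.trans hc.2).le
  have hgi : IntervalIntegrable g volume a b :=
    (intervalIntegrable_iff_integrableOn_Ioo_of_le hab).2 hg
  have hlip : ∀ t ∈ Ioo a b, |g c - g t| ≤ C * |c - t| := fun t ht => by
    simpa only [Real.norm_eq_abs] using (convex_Ioo a b).norm_image_sub_le_of_norm_hasDerivWithin_le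
      (fun y hy => (hderiv y hy).hasDerivWithinAt) hC ht hc
  have hsub : (b - a) * g c - ∫ t in a..b, g t = ∫ t in a..b, (g c - g t) := by
    rw [integral_sub intervalIntegrable_const hgi, intervalIntegral.integral_const, smul_eq_mul]
  calc |(b - a) * g c - ∫ t in a..b, g t|
      = |∫ t in a..b, (g c - g t)| := by rw [hsub]
    _ ≤ ∫ t in a..b, |g c - g t| := abs_integral_le_integral_abs hab
    _ ≤ ∫ t in a..b, C * |c - t| :=
      integral_mono_on_of_le_Ioo hab (intervalIntegrable_const.sub hgi).abs
        ((by fun_prop : Continuous fun t : ℝ => C * |c - t|).intervalIntegrable a b) hlip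
    _ = C * (((c - a) ^ 2 + (b - c) ^ 2) / 2) := by
      rw [intervalIntegral.integral_const_mul, integral_abs_sub_eq hc.1.le hc.2.le]

lemma Ioo_div_subset_Ioo {N j : ℕ} (hj : j < N) :
    Ioo ((j : ℝ) / N) ((j + 1) / N) ⊆ Ioo 0 1 := by
  have hN : (0 : ℝ) < N := by exact_mod_cast (Nat.zero_le j).trans_lt hj
  have hjN : (j : ℝ) + 1 ≤ N := by exact_mod_cast hj
  refine Ioo_subset_Ioo (by positivity) ?_
  rwa [div_le_one hN]

lemma add_div_mem_Ioo {N : ℕ} (hN : 0 < N) (j : ℕ) {x : ℝ} (hx : x ∈ Ioo 0 1) :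
    ((j : ℝ) + x) / N ∈ Ioo ((j : ℝ) / N) ((j + 1) / N) := by
  have hN' : (0 : ℝ) < N := by exact_mod_cast hN
  exact ⟨div_lt_div_of_pos_right (by linarith [hx.1]) hN',
    div_lt_div_of_pos_right (by linarith [hx.2]) hN'⟩

lemma sum_integral_Ioo_div {g : ℝ → ℝ} {N : ℕ} (hN : 0 < N)
    (hg : IntervalIntegrable g volume 0 1) :
    ∑ j ∈ Finset.range N, ∫ t in (j : ℝ) / N..(j + 1) / N, g t = ∫ t in (0 : ℝ)..1, g t := by
  have hN' : (N : ℝ) ≠ 0 := by positivity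
  have key := intervalIntegral.sum_integral_adjacent_intervals (a := fun j : ℕ => (j : ℝ) / N)
    (n := N) (f := g) (μ := volume) fun j hj => hg.mono_set <| by
      have hjN : (j : ℝ) + 1 ≤ N := by exact_mod_cast hj
      push_cast
      rw [uIcc_of_le zero_le_one, uIcc_of_le (by gcongr; linarith)]
      exact Icc_subset_Icc (by positivity) ((div_le_one₀ (by positivity)).2 hjN)
  simpa [hN'] using key

lemma sum_sSup_image_Ioo_div_le {f : ℝ → ℝ} (N : ℕ) (hbdd : BddAbove (f '' Ioo 0 1)) :
    ∑ j ∈ Finset.range N, sSup (f '' Ioo ((j : ℝ) / N) ((j + 1) / N))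
      ≤ N * sSup (f '' Ioo 0 1) := by
  calc ∑ j ∈ Finset.range N, sSup (f '' Ioo ((j : ℝ) / N) ((j + 1) / N))
      ≤ ∑ _j ∈ Finset.range N, sSup (f '' Ioo 0 1) := Finset.sum_le_sum fun j hj => by
        have hjN := Finset.mem_range.1 hj
        have hN : (0 : ℝ) < N := by exact_mod_cast (Nat.zero_le j).trans_lt hjN
        have hcell : ((j : ℝ) / N) < (j + 1) / N := div_lt_div_of_pos_right (by linarith) hN
        exact csSup_le_csSup hbdd ((nonempty_Ioo.2 hcell).image f)
          (image_mono (Ioo_div_subset_Ioo hjN))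
    _ = N * sSup (f '' Ioo 0 1) := by simp

lemma abs_inv_mul_sub_integral_Ioo_div_le {g g' : ℝ → ℝ} {N j : ℕ} (hj : j < N)
    (hderiv : ∀ y ∈ Ioo (0 : ℝ) 1, HasDerivAt g (g' y) y) (hg : IntegrableOn g (Ioo 0 1))
    (hbdd : BddAbove ((fun y => |g' y|) '' Ioo (0 : ℝ) 1)) {x : ℝ} (hx : x ∈ Ioo (0 : ℝ) 1) :
    |(N : ℝ)⁻¹ * g ((j + x) / N) - ∫ t in (j : ℝ) / N..(j + 1) / N, g t|
      ≤ sSup ((fun y => |g' y|) '' Ioo ((j : ℝ) / N) ((j + 1) / N)) *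
          ((x ^ 2 - x + 1 / 2) / N ^ 2) := by
  have hN : 0 < N := (Nat.zero_le j).trans_lt hj
  have hN' : (N : ℝ) ≠ 0 := by positivity
  have hcell := Ioo_div_subset_Ioo hj
  have hlen : ((j : ℝ) + 1) / N - j / N = (N : ℝ)⁻¹ := by field_simp; ring
  have hquad : ((((j : ℝ) + x) / N - j / N) ^ 2 + ((j + 1) / N - (j + x) / N) ^ 2) / 2
      = (x ^ 2 - x + 1 / 2) / N ^ 2 := by field_simp; ring
  have key := abs_mul_sub_integral_le (add_div_mem_Ioo hN j hx)
    (fun y hy => hderiv y (hcell hy))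
    (fun y hy => le_csSup (hbdd.mono (image_mono hcell)) (mem_image_of_mem _ hy))
    (hg.mono_set hcell)
  rwa [hlen, hquad] at key

theorem abs_riemannSum_sub_integral_le {g g' : ℝ → ℝ} {N : ℕ} (hN : 0 < N)
    (hderiv : ∀ y ∈ Ioo (0 : ℝ) 1, HasDerivAt g (g' y) y) (hg : IntegrableOn g (Ioo 0 1))
    (hbdd : BddAbove ((fun y => |g' y|) '' Ioo (0 : ℝ) 1)) {x : ℝ} (hx : x ∈ Ioo (0 : ℝ) 1) :
    |(N : ℝ)⁻¹ * ∑ j ∈ Finset.range N, g ((j + x) / N) - ∫ t in Ioo 0 1, g t|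
      ≤ ((N : ℝ) ^ 2)⁻¹ * (x ^ 2 - x + 1 / 2) *
          ∑ j ∈ Finset.range N, sSup ((fun y => |g' y|) '' Ioo ((j : ℝ) / N) ((j + 1) / N)) := by
  have hgi : IntervalIntegrable g volume 0 1 :=
    (intervalIntegrable_iff_integrableOn_Ioo_of_le zero_le_one).2 hg
  rw [← integral_Ioc_eq_integral_Ioo, ← intervalIntegral.integral_of_le zero_le_one,
    ← sum_integral_Ioo_div hN hgi, Finset.mul_sum, ← Finset.sum_sub_distrib]
  calc _ ≤ ∑ j ∈ Finset.range N,
          |(N : ℝ)⁻¹ * g ((j + x) / N) - ∫ t in (j : ℝ) / N..(j + 1) / N, g t| :=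
        Finset.abs_sum_le_sum_abs _ _
    _ ≤ ∑ j ∈ Finset.range N, sSup ((fun y => |g' y|) '' Ioo ((j : ℝ) / N) ((j + 1) / N)) *
          ((x ^ 2 - x + 1 / 2) / N ^ 2) := Finset.sum_le_sum fun j hj =>
        abs_inv_mul_sub_integral_Ioo_div_le (Finset.mem_range.1 hj) hderiv hg hbdd hx
    _ = _ := by rw [← Finset.sum_mul]; ring

theorem stmt9_general
    (q : ℕ) (hq : 2 ≤ q)
    (g g' : ℝ → ℝ)
    (hderiv : ∀ x ∈ Set.Ioo (0:ℝ) 1, HasDerivAt g (g' x) x)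
    (hint : ∫ t in Set.Ioo (0:ℝ) 1, g t = 1)
    -- `‖g′‖_∞ < ∞`
    (hbdd : BddAbove ((fun x => |g' x|) '' Set.Ioo (0:ℝ) 1))
    (n : ℕ) (x : ℝ) (hx : x ∈ Set.Ioo (0:ℝ) 1) :
    |gIter q g n x - 1|
      ≤ (q : ℝ) ^ (-(2 * n : ℤ)) * (x ^ 2 - x + 1 / 2) *
          ∑ j ∈ Finset.range (q ^ n),
            sSup ((fun y => |g' y|) ''
              Set.Ioo ((j : ℝ) / (q : ℝ) ^ n) (((j : ℝ) + 1) / (q : ℝ) ^ n))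
    ∧ (q : ℝ) ^ (-(2 * n : ℤ)) * (x ^ 2 - x + 1 / 2) *
          ∑ j ∈ Finset.range (q ^ n),
            sSup ((fun y => |g' y|) ''
              Set.Ioo ((j : ℝ) / (q : ℝ) ^ n) (((j : ℝ) + 1) / (q : ℝ) ^ n))
        ≤ (1 / 2) * (q : ℝ) ^ (-(n : ℤ)) * sSup ((fun y => |g' y|) '' Set.Ioo (0:ℝ) 1) := by
  have hN : 0 < q ^ n := pow_pos (by omega) n
  have hg : IntegrableOn g (Ioo 0 1) := Integrable.of_integral_ne_zero (by rw [hint]; norm_num)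
  have hcast : (q : ℝ) ^ n = ((q ^ n : ℕ) : ℝ) := by push_cast; rfl
  have hzpow : (q : ℝ) ^ (-(n : ℤ)) = ((q ^ n : ℕ) : ℝ)⁻¹ := by
    rw [zpow_neg, zpow_natCast, hcast]
  have hzpow2 : (q : ℝ) ^ (-(2 * n : ℤ)) = (((q ^ n : ℕ) : ℝ) ^ 2)⁻¹ := by
    rw [zpow_neg, ← hcast, ← pow_mul, mul_comm n 2]
    norm_cast
  rw [gIter, hzpow, hzpow2, hcast]
  refine ⟨by simpa only [hint] using abs_riemannSum_sub_integral_le hN hderiv hg hbdd hx, ?_⟩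
  have hsum := sum_sSup_image_Ioo_div_le (q ^ n) hbdd
  have hM : 0 ≤ sSup ((fun y => |g' y|) '' Ioo (0 : ℝ) 1) :=
    Real.sSup_nonneg (by rintro _ ⟨y, -, rfl⟩; exact abs_nonneg _)
  have hpoly : x ^ 2 - x + 1 / 2 ≤ 1 / 2 := by nlinarith [hx.1, hx.2]
  have hpoly0 : 0 ≤ x ^ 2 - x + 1 / 2 := by nlinarith [sq_nonneg (x - 1 / 2)]
  calc _ ≤ (((q ^ n : ℕ) : ℝ) ^ 2)⁻¹ * (x ^ 2 - x + 1 / 2) *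
          ((q ^ n : ℕ) * sSup ((fun y => |g' y|) '' Ioo 0 1)) := by gcongr
    _ ≤ (((q ^ n : ℕ) : ℝ) ^ 2)⁻¹ * (1 / 2) *
          ((q ^ n : ℕ) * sSup ((fun y => |g' y|) '' Ioo 0 1)) := by gcongr
    _ = _ := by field_simp

theorem stmt9
    (q : ℕ) (hq : 2 ≤ q)
    (g g' : ℝ → ℝ)
    (hderiv : ∀ x ∈ Set.Ioo (0:ℝ) 1, HasDerivAt g (g' x) x)
    (hint : ∫ t in Set.Ioo (0:ℝ) 1, g t = 1)
    -- `‖g′‖_∞ < ∞`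
    (hbdd : BddAbove ((fun x => |g' x|) '' Set.Ioo (0:ℝ) 1))
    (n : ℕ) (hn : 1 ≤ n) (x : ℝ) (hx : x ∈ Set.Ioo (0:ℝ) 1) :
    |gIter q g n x - 1|
      ≤ (q : ℝ) ^ (-(2 * n : ℤ)) * (x ^ 2 - x + 1 / 2) *
          ∑ j ∈ Finset.range (q ^ n),
            sSup ((fun y => |g' y|) ''
              Set.Ioo ((j : ℝ) / (q : ℝ) ^ n) (((j : ℝ) + 1) / (q : ℝ) ^ n))
    ∧ (q : ℝ) ^ (-(2 * n : ℤ)) * (x ^ 2 - x + 1 / 2) *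
          ∑ j ∈ Finset.range (q ^ n),
            sSup ((fun y => |g' y|) ''
              Set.Ioo ((j : ℝ) / (q : ℝ) ^ n) (((j : ℝ) + 1) / (q : ℝ) ^ n))
        ≤ (1 / 2) * (q : ℝ) ^ (-(n : ℤ)) * sSup ((fun y => |g' y|) '' Set.Ioo (0:ℝ) 1) :=
  stmt9_general q hq g g' hderiv hint hbdd n x hx
end
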